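/- arXiv:2209.14462 — 12 statements merged into one kernel-verified Lean document; each statement's English description precedes it below -/
import Mathlib

section
/- Let ρ ∈ (0,1], ε_u, ε_s ≥ 0, and let x̄, p̄, μ̄ : [0,∞) → ℝ. Assume (ε_u-UIC) for all v, b ≥ 0: v·x̄(v) − p̄(v) ≥ v·x̄(b) − p̄(b) − ε_u; and (ε_s-SCP for a coalition of a ρ-fraction of miners and one user with true value y) for all 0 ≤ y ≤ z: y·x̄(y) − p̄(y) + ρ·μ̄(y) + ε_s ≥ y·x̄(z) − p̄(z) + ρ·μ̄(z). Then for all 0 ≤ y ≤ z: μ̄(z) − μ̄(y) ≤ (1/ρ)·(ε_u + ε_s + (z − y)·(x̄(z) − x̄(y))). -/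
/-!
Overbidding from `y` to `z` raises the coalition's miner share by `ρ (μ̄ z - μ̄ y)` and, by SCP,
this gain is paid for by the user's utility loss up to `ε_s`. The user's loss from overbidding
plus the loss from underbidding `y` at true value `z` equals `(z - y)(x̄ z - x̄ y)`, and UIC bounds
the second loss from below by `-ε_u`.
-/

def bidUtility (x p : ℝ → ℝ) (value bid : ℝ) : ℝ := value * x bid - p bid

theorem bidUtility_loss_add_bidUtility_loss (x p : ℝ → ℝ) (y z : ℝ) :
    (bidUtility x p y y - bidUtility x p y z) + (bidUtility x p z z - bidUtility x p z y) =
      (z - y) * (x z - x y) := by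
  simp only [bidUtility]
  ring

theorem bidUtility_loss_le_of_ge {x p : ℝ → ℝ} {ε y z : ℝ}
    (h : bidUtility x p z z ≥ bidUtility x p z y - ε) :
    bidUtility x p y y - bidUtility x p y z ≤ ε + (z - y) * (x z - x y) := by
  linarith [bidUtility_loss_add_bidUtility_loss x p y z]

theorem miner_step_eps_UIC_general
    (ρ εu εs : ℝ) (hρ0 : 0 < ρ)
    (xbar pbar mubar : ℝ → ℝ)
    (hUIC : ∀ v b : ℝ, 0 ≤ v → 0 ≤ b →
      v * xbar v - pbar v ≥ v * xbar b - pbar b - εu)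
    (hSCP : ∀ y z : ℝ, 0 ≤ y → y ≤ z →
      y * xbar y - pbar y + ρ * mubar y + εs ≥ y * xbar z - pbar z + ρ * mubar z) :
    ∀ y z : ℝ, 0 ≤ y → y ≤ z →
      mubar z - mubar y ≤ (1 / ρ) * (εu + εs + (z - y) * (xbar z - xbar y)) := by
  intro y z hy hyz
  have hloss : bidUtility xbar pbar y y - bidUtility xbar pbar y z ≤
      εu + (z - y) * (xbar z - xbar y) :=
    bidUtility_loss_le_of_ge (hUIC z y (hy.trans hyz) hy)
  have hcoalition := hSCP y z hy hyz
  rw [one_div, inv_mul_eq_div, le_div_iff₀ hρ0]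
  simp only [bidUtility] at hloss
  linarith

/-- Per-step bound on the change of expected miner revenue implied by
ε_u-UIC together with ε_s-SCP for a coalition of a ρ-fraction of the
miners and one user (averaged single-user view of a TFM). -/
theorem miner_step_eps_UIC
    (ρ εu εs : ℝ) (hρ0 : 0 < ρ) (hρ1 : ρ ≤ 1) (hεu : 0 ≤ εu) (hεs : 0 ≤ εs)
    (xbar pbar mubar : ℝ → ℝ)
    (hUIC : ∀ v b : ℝ, 0 ≤ v → 0 ≤ b →
      v * xbar v - pbar v ≥ v * xbar b - pbar b - εu)
    (hSCP : ∀ y z : ℝ, 0 ≤ y → y ≤ z →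
      y * xbar y - pbar y + ρ * mubar y + εs ≥ y * xbar z - pbar z + ρ * mubar z) :
    ∀ y z : ℝ, 0 ≤ y → y ≤ z →
      mubar z - mubar y ≤ (1 / ρ) * (εu + εs + (z - y) * (xbar z - xbar y)) :=
  miner_step_eps_UIC_general ρ εu εs hρ0 xbar pbar mubar hUIC hSCP
end

section
/- Let D be a Borel probability measure on [0,∞) with C_D := ∫√x dD(x) < ∞, let ρ ∈ (0,1], let ε_u, ε_s, ε_m ≥ 0, set ε' = ε_u + ε_s and ε = ε_u + ε_s + ε_m. For each integer ℓ ≥ 0 let μ_ℓ : [0,∞)^ℓ → ℝ be measurable and D^ℓ-integrable with μ_0 = 0, and assume: (i) for every ℓ ≥ 0, ∫ μ_{ℓ+1}(b, 0) dD^ℓ(b) ≤ ∫ μ_ℓ(b) dD^ℓ(b) + ε_m/ρ (the consequence of Bayesian ε_m-MIC: a ρ-fraction miner coalition injecting a zero bid gains at most ε_m); (ii) for every n ≥ 1 and every r ≥ 0, ∫ μ_n(b', r) dD^{n−1}(b') − ∫ μ_n(b', 0) dD^{n−1}(b') ≤ (2/ρ)·ε' if r ≤ ε' and ≤ (2/ρ)·√(r·ε')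 if r > ε' (the per-user revenue-change bound implied by Bayesian ε_u-UIC and Bayesian ε_s-SCP against (ρ,1)-sized coalitions). Then for every n ≥ 0: ∫ μ_n dD^n ≤ (2n/ρ)·(ε + C_D·√ε). -/
/-!
Lower the bids to `0` one user at a time. Integrating out the last bid `r ∼ D`, hypothesis (ii)
bounds the gain over the bid `0` by `(2/ρ)(ε' + √ε' · √r)`, whose `D`-expectation is
`(2/ρ)(ε' + C_D √ε')`; by (i), appending the bid `0` to `n` bids raises the expected revenue
by at most `ε_m/ρ`.
Each user therefore adds at most `(2/ρ)(ε + C_D √ε)`, and `μ_0 = 0` starts the induction.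
-/

open MeasureTheory

section PiSnoc

variable {α : Type*} [MeasurableSpace α] (ν : Measure α) [SigmaFinite ν] {n : ℕ}

theorem piFinSuccAbove_last_symm_apply (r : α) (b : Fin n → α) :
    (MeasurableEquiv.piFinSuccAbove (fun _ : Fin (n + 1) => α) (Fin.last n)).symm (r, b)
      = Fin.snoc b r := by
  simp [MeasurableEquiv.piFinSuccAbove_symm_apply, Fin.insertNthEquiv, Fin.insertNth_last']

theorem measurePreserving_piFinSuccAbove_last_symm :
    MeasurePreserving
      (MeasurableEquiv.piFinSuccAbove (fun _ : Fin (n + 1) => α) (Fin.last n)).symm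
      (ν.prod (Measure.pi fun _ : Fin n => ν)) (Measure.pi fun _ : Fin (n + 1) => ν) :=
  (measurePreserving_piFinSuccAbove (fun _ => ν) (Fin.last n)).symm _

theorem integrable_comp_piFinSuccAbove_last_symm {f : (Fin (n + 1) → α) → ℝ}
    (hf : Integrable f (Measure.pi fun _ => ν)) :
    Integrable (f ∘ (MeasurableEquiv.piFinSuccAbove (fun _ => α) (Fin.last n)).symm)
      (ν.prod (Measure.pi fun _ : Fin n => ν)) :=
  ((measurePreserving_piFinSuccAbove_last_symm ν).integrable_comp_emb
    (MeasurableEquiv.measurableEmbedding _)).2 hf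

theorem integrable_integral_snoc {f : (Fin (n + 1) → α) → ℝ}
    (hf : Integrable f (Measure.pi fun _ => ν)) :
    Integrable (fun r => ∫ b, f (Fin.snoc b r) ∂(Measure.pi fun _ : Fin n => ν)) ν := by
  have h := integrable_comp_piFinSuccAbove_last_symm ν hf
  simpa only [Function.comp_apply, piFinSuccAbove_last_symm_apply] using h.integral_prod_left

theorem integral_pi_succ_eq_integral_snoc {f : (Fin (n + 1) → α) → ℝ}
    (hf : Integrable f (Measure.pi fun _ => ν)) :
    ∫ x, f x ∂(Measure.pi fun _ => ν)
      = ∫ r, ∫ b, f (Fin.snoc b r) ∂(Measure.pi fun _ : Fin n => ν) ∂ν := by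
  have h := integrable_comp_piFinSuccAbove_last_symm ν hf
  rw [← (measurePreserving_piFinSuccAbove_last_symm ν).integral_comp']
  exact (integral_prod _ h).trans
    (by simp only [Function.comp_apply, piFinSuccAbove_last_symm_apply])

end PiSnoc

theorem ite_le_add_sqrt_mul_sqrt {c ε r : ℝ} (hc : 0 ≤ c) (hε : 0 ≤ ε) (hr : 0 ≤ r) :
    (if r ≤ ε then c * ε else c * Real.sqrt (r * ε))
      ≤ c * ε + c * Real.sqrt ε * Real.sqrt r := by
  have : 0 ≤ c * Real.sqrt ε * Real.sqrt r := by positivity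
  have : 0 ≤ c * ε := by positivity
  split_ifs
  · linarith
  · rw [Real.sqrt_mul hr]; linarith

theorem integral_le_of_sub_le_add_sqrt {D : Measure ℝ} [IsProbabilityMeasure D]
    (hD : ∀ᵐ r ∂D, 0 ≤ r) (hsqrt : Integrable (fun x => Real.sqrt x) D)
    {F : ℝ → ℝ} (hF : Integrable F D) {a c : ℝ}
    (h : ∀ r, 0 ≤ r → F r - F 0 ≤ a + c * Real.sqrt r) :
    ∫ r, F r ∂D ≤ F 0 + a + c * ∫ x, Real.sqrt x ∂D := by
  have hbound : Integrable (fun r => F 0 + a + c * Real.sqrt r) D :=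
    (integrable_const _).add (hsqrt.const_mul c)
  calc ∫ r, F r ∂D ≤ ∫ r, F 0 + a + c * Real.sqrt r ∂D :=
        integral_mono_ae hF hbound (hD.mono fun r hr => by linarith [h r hr])
    _ = F 0 + a + c * ∫ x, Real.sqrt x ∂D := by
        rw [integral_add (integrable_const _) (hsqrt.const_mul c), integral_const,
          integral_const_mul]
        simp

theorem integral_pi_succ_le_add {D : Measure ℝ} [IsProbabilityMeasure D]
    (hD : ∀ᵐ r ∂D, 0 ≤ r) (hsqrt : Integrable (fun x => Real.sqrt x) D)
    {ρ ε' εm : ℝ} (hρ : 0 < ρ) (hε' : 0 ≤ ε') (hεm : 0 ≤ εm) {n : ℕ}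
    {f : (Fin (n + 1) → ℝ) → ℝ} {g : (Fin n → ℝ) → ℝ}
    (hf : Integrable f (Measure.pi fun _ => D))
    (hzero : ∫ b, f (Fin.snoc b 0) ∂(Measure.pi fun _ : Fin n => D)
      ≤ (∫ b, g b ∂(Measure.pi fun _ : Fin n => D)) + εm / ρ)
    (hstep : ∀ r : ℝ, 0 ≤ r →
      (∫ b, f (Fin.snoc b r) ∂(Measure.pi fun _ : Fin n => D))
          - (∫ b, f (Fin.snoc b 0) ∂(Measure.pi fun _ : Fin n => D))
        ≤ if r ≤ ε' then (2 / ρ) * ε' else (2 / ρ) * Real.sqrt (r * ε')) :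
    ∫ x, f x ∂(Measure.pi fun _ => D)
      ≤ (∫ b, g b ∂(Measure.pi fun _ : Fin n => D))
        + (2 / ρ) * ((ε' + εm) + (∫ x, Real.sqrt x ∂D) * Real.sqrt (ε' + εm)) := by
  have hC : 0 ≤ ∫ x, Real.sqrt x ∂D := integral_nonneg fun x => Real.sqrt_nonneg x
  have hsqrt_mono : Real.sqrt ε' ≤ Real.sqrt (ε' + εm) := Real.sqrt_le_sqrt (by linarith)
  have h2ρ : 0 ≤ 2 / ρ := by positivity
  rw [integral_pi_succ_eq_integral_snoc D hf]
  refine (integral_le_of_sub_le_add_sqrt hD hsqrt (integrable_integral_snoc D hf)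
    fun r hr => (hstep r hr).trans (ite_le_add_sqrt_mul_sqrt h2ρ hε' hr)).trans ?_
  have : (2 / ρ) * Real.sqrt ε' * ∫ x, Real.sqrt x ∂D
      ≤ (2 / ρ) * ((∫ x, Real.sqrt x ∂D) * Real.sqrt (ε' + εm)) := by
    rw [mul_comm (∫ x, Real.sqrt x ∂D), mul_assoc]
    gcongr
  have : εm / ρ ≤ (2 / ρ) * εm := by
    rw [div_mul_eq_mul_div]; gcongr; linarith
  linarith

theorem miner_revenue_limit_general
    (D : Measure ℝ) [IsProbabilityMeasure D]
    (hD : D (Set.Iio 0) = 0)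
    (hsqrt : Integrable (fun x => Real.sqrt x) D)
    (ρ εu εs εm : ℝ) (hρ0 : 0 < ρ)
    (hεu : 0 ≤ εu) (hεs : 0 ≤ εs) (hεm : 0 ≤ εm)
    (μ : (ℓ : ℕ) → (Fin ℓ → ℝ) → ℝ)
    (hint : ∀ ℓ, Integrable (μ ℓ) (Measure.pi fun _ : Fin ℓ => D))
    (hzero : ∀ b : Fin 0 → ℝ, μ 0 b = 0)
    (hMIC : ∀ ℓ : ℕ,
      (∫ b, μ (ℓ + 1) (Fin.snoc b 0) ∂(Measure.pi fun _ : Fin ℓ => D))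
        ≤ (∫ b, μ ℓ b ∂(Measure.pi fun _ : Fin ℓ => D)) + εm / ρ)
    (hstep : ∀ n : ℕ, ∀ r : ℝ, 0 ≤ r →
      (∫ b, μ (n + 1) (Fin.snoc b r) ∂(Measure.pi fun _ : Fin n => D))
          - (∫ b, μ (n + 1) (Fin.snoc b 0) ∂(Measure.pi fun _ : Fin n => D))
        ≤ if r ≤ εu + εs then (2 / ρ) * (εu + εs)
          else (2 / ρ) * Real.sqrt (r * (εu + εs))) :
    ∀ n : ℕ,
      (∫ b, μ n b ∂(Measure.pi fun _ : Fin n => D))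
        ≤ (2 * n / ρ) *
            ((εu + εs + εm) + (∫ x, Real.sqrt x ∂D) * Real.sqrt (εu + εs + εm)) := by
  have hD' : ∀ᵐ r ∂D, 0 ≤ r := measure_mono_null (fun r (hr : ¬0 ≤ r) => not_le.1 hr) hD
  intro n
  induction n with
  | zero => simp [hzero]
  | succ n ih =>
    calc (∫ b, μ (n + 1) b ∂(Measure.pi fun _ => D))
        ≤ (∫ b, μ n b ∂(Measure.pi fun _ => D)) + (2 / ρ) *
            ((εu + εs + εm) + (∫ x, Real.sqrt x ∂D) * Real.sqrt (εu + εs + εm)) :=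
          integral_pi_succ_le_add hD' hsqrt hρ0 (add_nonneg hεu hεs) hεm (hint _) (hMIC n)
            (hstep n)
      _ ≤ (2 * n / ρ + 2 / ρ) *
            ((εu + εs + εm) + (∫ x, Real.sqrt x ∂D) * Real.sqrt (εu + εs + εm)) := by
          rw [add_mul]; gcongr
      _ = _ := by push_cast; ring

/-- Limit on expected miner revenue for approximately incentive compatible
MPC-assisted transaction fee mechanisms: if (i) injecting a zero bid gains the
miner coalition at most ε_m/ρ on average, and (ii) raising any single user's
bid from 0 to r changes the expected miner revenue by at most (2/ρ)ε' when
r ≤ ε' and at most (2/ρ)√(rε') when r > ε' (where ε' = ε_u + ε_s), then the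
expected total miner revenue over n i.i.d. bids from D is at most
(2n/ρ)(ε + C_D√ε), where ε = ε_u + ε_s + ε_m and C_D = ∫ √x dD. -/
theorem miner_revenue_limit
    (D : Measure ℝ) [IsProbabilityMeasure D]
    (hD : D (Set.Iio 0) = 0)
    (hsqrt : Integrable (fun x => Real.sqrt x) D)
    (ρ εu εs εm : ℝ) (hρ0 : 0 < ρ) (hρ1 : ρ ≤ 1)
    (hεu : 0 ≤ εu) (hεs : 0 ≤ εs) (hεm : 0 ≤ εm)
    (μ : (ℓ : ℕ) → (Fin ℓ → ℝ) → ℝ)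
    (hmeas : ∀ ℓ, Measurable (μ ℓ))
    (hint : ∀ ℓ, Integrable (μ ℓ) (Measure.pi fun _ : Fin ℓ => D))
    (hzero : ∀ b : Fin 0 → ℝ, μ 0 b = 0)
    (hMIC : ∀ ℓ : ℕ,
      (∫ b, μ (ℓ + 1) (Fin.snoc b 0) ∂(Measure.pi fun _ : Fin ℓ => D))
        ≤ (∫ b, μ ℓ b ∂(Measure.pi fun _ : Fin ℓ => D)) + εm / ρ)
    (hstep : ∀ n : ℕ, ∀ r : ℝ, 0 ≤ r →
      (∫ b, μ (n + 1) (Fin.snoc b r) ∂(Measure.pi fun _ : Fin n => D))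
          - (∫ b, μ (n + 1) (Fin.snoc b 0) ∂(Measure.pi fun _ : Fin n => D))
        ≤ if r ≤ εu + εs then (2 / ρ) * (εu + εs)
          else (2 / ρ) * Real.sqrt (r * (εu + εs))) :
    ∀ n : ℕ,
      (∫ b, μ n b ∂(Measure.pi fun _ : Fin n => D))
        ≤ (2 * n / ρ) *
            ((εu + εs + εm) + (∫ x, Real.sqrt x ∂D) * Real.sqrt (εu + εs + εm)) :=
  miner_revenue_limit_general D hD hsqrt ρ εu εs εm hρ0 hεu hεs hεm μ hint hzero hMIC hstep
end

section
/- Let f : [0,∞) → ℝ be nondecreasing and let g : [0,∞) → ℝ satisfy g(0) = 0 and, for all 0 ≤ z ≤ z', z·(f(z') − f(z)) ≤ g(z') − g(z) ≤ z'·(f(z') − f(z)). Then for every z ≥ 0, g(z) = z·f(z) − ∫₀^z f(t) dt. -/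
/-!
Write `p z = z * f z - ∫₀^z f` for the Myerson payment. As `f` is monotone, `∫_z^{z'} f` lies
between `(z' - z) * f z` and `(z' - z) * f z'`, so `p` obeys the same sandwich as `g`. Hence the
increments of `D = g - p` satisfy `|D z' - D z| ≤ (z' - z) * (f z' - f z)`. Summing this over a
uniform partition of `[0, z]` into `n` pieces telescopes to `|D z - D 0| ≤ z * (f z - f 0) / n`,
so `D z = D 0 = 0`.
-/

open Set Filter Topology

section IncrementBound

open Finset

variable {D F : ℝ → ℝ} {a b : ℝ}

theorem abs_sub_le_div_mul_of_abs_sub_le_mul_sub (hab : a ≤ b)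
    (hDF : ∀ x y, a ≤ x → x ≤ y → y ≤ b → |D y - D x| ≤ (y - x) * (F y - F x))
    {n : ℕ} (hn : 0 < n) : |D b - D a| ≤ (b - a) / n * (F b - F a) := by
  set h := (b - a) / n
  set x : ℕ → ℝ := fun i => a + i * h
  have hh : 0 ≤ h := div_nonneg (sub_nonneg.2 hab) n.cast_nonneg
  have hx_mono : Monotone x := fun i j hij => by simp only [x]; gcongr
  have hx0 : x 0 = a := by simp [x]
  have hxn : x n = b := by simp only [x, h]; field_simp; ring
  have hstep : ∀ i, x (i + 1) - x i = h := fun i => by simp only [x]; push_cast; ring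
  calc |D b - D a| = |∑ i ∈ range n, (D (x (i + 1)) - D (x i))| := by
        rw [sum_range_sub (fun i => D (x i)), hx0, hxn]
    _ ≤ ∑ i ∈ range n, |D (x (i + 1)) - D (x i)| := abs_sum_le_sum_abs _ _
    _ ≤ ∑ i ∈ range n, h * (F (x (i + 1)) - F (x i)) := by
        refine sum_le_sum fun i hi => ?_
        rw [← hstep i]
        refine hDF _ _ (hx0 ▸ hx_mono i.zero_le) (hx_mono i.le_succ) (hxn ▸ hx_mono ?_)
        exact Nat.succ_le_of_lt (mem_range.1 hi)
    _ = h * (F b - F a) := by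
        rw [← mul_sum, sum_range_sub (fun i => F (x i)), hx0, hxn]

theorem eq_of_abs_sub_le_mul_sub (hab : a ≤ b)
    (hDF : ∀ x y, a ≤ x → x ≤ y → y ≤ b → |D y - D x| ≤ (y - x) * (F y - F x)) :
    D b = D a := by
  have hlim : Tendsto (fun n : ℕ => (b - a) / n * (F b - F a)) atTop (𝓝 0) := by
    simpa using (tendsto_const_div_atTop_nhds_zero_nat (b - a)).mul_const (F b - F a)
  have hle : |D b - D a| ≤ 0 :=
    ge_of_tendsto hlim <| (eventually_gt_atTop 0).mono fun n hn =>
      abs_sub_le_div_mul_of_abs_sub_le_mul_sub hab hDF hn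
  exact sub_eq_zero.1 (abs_nonpos_iff.1 hle)

end IncrementBound

section MonotoneIntegral

variable {f : ℝ → ℝ} {a b : ℝ}

theorem MonotoneOn.intervalIntegrable_of_Icc (hf : MonotoneOn f (Icc a b)) (hab : a ≤ b) :
    IntervalIntegrable f MeasureTheory.volume a b :=
  MonotoneOn.intervalIntegrable (by rwa [uIcc_of_le hab])

theorem MonotoneOn.sub_mul_le_intervalIntegral (hf : MonotoneOn f (Icc a b)) (hab : a ≤ b) :
    (b - a) * f a ≤ ∫ t in a..b, f t := by
  simpa using intervalIntegral.integral_mono_on hab intervalIntegrable_const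
    (hf.intervalIntegrable_of_Icc hab)
    fun t ht => hf (left_mem_Icc.2 hab) ht ht.1

theorem MonotoneOn.intervalIntegral_le_sub_mul (hf : MonotoneOn f (Icc a b)) (hab : a ≤ b) :
    ∫ t in a..b, f t ≤ (b - a) * f b := by
  simpa using intervalIntegral.integral_mono_on hab
    (hf.intervalIntegrable_of_Icc hab) intervalIntegrable_const
    fun t ht => hf ht (right_mem_Icc.2 hab) ht.2

end MonotoneIntegral

noncomputable def myersonPayment (f : ℝ → ℝ) (z : ℝ) : ℝ :=
  z * f z - ∫ t in (0 : ℝ)..z, f t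

theorem myersonPayment_sub_mem_Icc {f : ℝ → ℝ} {x y : ℝ} (hf : MonotoneOn f (Icc 0 y))
    (hx : 0 ≤ x) (hxy : x ≤ y) :
    myersonPayment f y - myersonPayment f x ∈ Icc (x * (f y - f x)) (y * (f y - f x)) := by
  have hfx : MonotoneOn f (Icc x y) := hf.mono (Icc_subset_Icc hx le_rfl)
  have hsplit : (∫ t in (0 : ℝ)..x, f t) + ∫ t in x..y, f t = ∫ t in (0 : ℝ)..y, f t :=
    intervalIntegral.integral_add_adjacent_intervals
      ((hf.mono (Icc_subset_Icc le_rfl hxy)).intervalIntegrable_of_Icc hx)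
      (hfx.intervalIntegrable_of_Icc hxy)
  have hlow := hfx.sub_mul_le_intervalIntegral hxy
  have hhigh := hfx.intervalIntegral_le_sub_mul hxy
  simp only [myersonPayment, mem_Icc]
  constructor <;> linarith

/-- Technical lemma implied by the proof of Myerson's lemma: a nondecreasing
allocation-like function f together with a payment-like function g squeezed by
the payment-difference sandwich must equal the unique Myerson payment rule. -/
theorem myerson_sandwich_lemma
    (f g : ℝ → ℝ)
    (hf : ∀ z z' : ℝ, 0 ≤ z → z ≤ z' → f z ≤ f z')
    (hg0 : g 0 = 0)
    (hsand : ∀ z z' : ℝ, 0 ≤ z → z ≤ z' →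
      z * (f z' - f z) ≤ g z' - g z ∧ g z' - g z ≤ z' * (f z' - f z)) :
    ∀ z : ℝ, 0 ≤ z → g z = z * f z - ∫ t in (0:ℝ)..z, f t := by
  intro z hz
  have hmono : MonotoneOn f (Icc 0 z) := fun x hx _ _ hxy => hf x _ hx.1 hxy
  have hD : g z - myersonPayment f z = g 0 - myersonPayment f 0 :=
    eq_of_abs_sub_le_mul_sub (D := fun w => g w - myersonPayment f w) (F := f) hz
      fun x y hx hxy hy => by
        obtain ⟨hg_low, hg_high⟩ := hsand x y hx hxy
        obtain ⟨hp_low, hp_high⟩ :=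
          myersonPayment_sub_mem_Icc (hmono.mono (Icc_subset_Icc le_rfl hy)) hx hxy
        rw [abs_le]
        constructor <;> linarith
  simp only [myersonPayment, hg0, zero_mul, intervalIntegral.integral_same] at hD
  linarith
end

section
/- Let x : [0,∞) → [0,1] be nondecreasing, define p(b) = b·x(b) − ∫₀^b x(t) dt, let μ : [0,∞) → ℝ, and let ρ ∈ (0,1]. Suppose that for all 0 ≤ r ≤ r': r·(x(r') − x(r)) ≤ (p(r') − ρ·μ(r')) − (p(r) − ρ·μ(r)) ≤ r'·(x(r') − x(r)). Then μ(r) = μ(0) for all r ≥ 0. -/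
/-!
Subtracting the two sandwiches (for `p`, which holds by Myerson's formula, and for `p - ρμ`)
gives `ρ |μ b - μ a| ≤ (b - a) (x b - x a)`. The right-hand side is quadratically small
in the mesh: over a uniform partition of `[0, r]` into `n` pieces it telescopes to
`(r / n) (x r - x 0)`, which tends to `0`.
-/

open Finset Filter Topology

theorem eq_of_abs_sub_le_mul_sub_s6 {f g : ℝ → ℝ} {a b : ℝ} (hab : a ≤ b)
    (h : ∀ s t, a ≤ s → s ≤ t → t ≤ b → |f t - f s| ≤ (t - s) * (g t - g s)) :
    f b = f a := by
  have hpartition : ∀ n : ℕ, 0 < n → |f b - f a| ≤ (b - a) * (g b - g a) / n := by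
    intro n hn
    have hn' : (0 : ℝ) < n := Nat.cast_pos.mpr hn
    set u : ℕ → ℝ := fun i => a + i * ((b - a) / n) with hu
    have hu_step : ∀ i, u (i + 1) - u i = (b - a) / n := fun i => by push_cast [hu]; ring
    have hu0 : u 0 = a := by simp [hu]
    have hun : u n = b := by rw [hu]; field_simp; ring
    have hu_mono : Monotone u := fun i j hij => by
      simp only [hu]; gcongr
    have hu_mem : ∀ i ≤ n, a ≤ u i ∧ u i ≤ b := fun i hi =>
      ⟨hu0 ▸ hu_mono (Nat.zero_le i), hun ▸ hu_mono hi⟩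
    calc |f b - f a| = |∑ i ∈ range n, (f (u (i + 1)) - f (u i))| := by
          rw [sum_range_sub (fun i => f (u i)), hu0, hun]
      _ ≤ ∑ i ∈ range n, |f (u (i + 1)) - f (u i)| := abs_sum_le_sum_abs _ _
      _ ≤ ∑ i ∈ range n, (b - a) / n * (g (u (i + 1)) - g (u i)) := by
          refine sum_le_sum fun i hi => ?_
          have hi := mem_range.mp hi
          rw [← hu_step i]
          exact h _ _ (hu_mem i hi.le).1 (hu_mono i.le_succ) (hu_mem (i + 1) hi).2
      _ = (b - a) * (g b - g a) / n := by
          rw [← mul_sum, sum_range_sub (fun i => g (u i)), hu0, hun]; ring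
  have hzero : |f b - f a| ≤ 0 :=
    ge_of_tendsto (tendsto_const_div_atTop_nhds_zero_nat _)
      ((eventually_gt_atTop 0).mono hpartition)
  linarith [abs_nonpos_iff.mp hzero]

/-- The increment of Myerson's payment `b x b - ∫₀ᵇ x` from `a` to `b`. -/
theorem MonotoneOn.mul_sub_le_sub_integral {x : ℝ → ℝ} {a b : ℝ} (hx : MonotoneOn x (Set.Icc a b))
    (hab : a ≤ b) :
    a * (x b - x a) ≤ b * x b - a * x a - ∫ t in a..b, x t ∧
      b * x b - a * x a - ∫ t in a..b, x t ≤ b * (x b - x a) := by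
  have hint : IntervalIntegrable x MeasureTheory.volume a b :=
    (Set.uIcc_of_le hab ▸ hx).intervalIntegrable
  have hmem_a : a ∈ Set.Icc a b := ⟨le_rfl, hab⟩
  have hmem_b : b ∈ Set.Icc a b := ⟨hab, le_rfl⟩
  have hlow : (b - a) * x a ≤ ∫ t in a..b, x t := by
    simpa using intervalIntegral.integral_mono_on hab intervalIntegrable_const hint
      fun t ht => hx hmem_a ht ht.1
  have hhigh : ∫ t in a..b, x t ≤ (b - a) * x b := by
    simpa using intervalIntegral.integral_mono_on hab hint intervalIntegrable_const
      fun t ht => hx ht hmem_b ht.2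
  constructor <;> linarith

theorem constant_revenue_general
    (x p μ : ℝ → ℝ) (ρ : ℝ) (hρ0 : 0 < ρ)
    (hmono : ∀ r r' : ℝ, 0 ≤ r → r ≤ r' → x r ≤ x r')
    (hp : ∀ b : ℝ, p b = b * x b - ∫ t in (0:ℝ)..b, x t)
    (hsand : ∀ r r' : ℝ, 0 ≤ r → r ≤ r' →
      r * (x r' - x r) ≤ (p r' - ρ * μ r') - (p r - ρ * μ r) ∧
      (p r' - ρ * μ r') - (p r - ρ * μ r) ≤ r' * (x r' - x r)) :
    ∀ r : ℝ, 0 ≤ r → μ r = μ 0 := by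
  intro r hr
  have hx : MonotoneOn x (Set.Ici 0) := fun s hs t _ hst => hmono s t hs hst
  have hint : ∀ b, 0 ≤ b → IntervalIntegrable x MeasureTheory.volume 0 b := fun b hb =>
    (hx.mono (Set.uIcc_of_le hb ▸ Set.Icc_subset_Ici_self)).intervalIntegrable
  have hrevenue : ∀ a b, 0 ≤ a → a ≤ b →
      |ρ * μ b - ρ * μ a| ≤ (b - a) * (x b - x a) := by
    intro a b ha hab
    have hsplit : p b - p a = b * x b - a * x a - ∫ t in a..b, x t := by
      rw [hp, hp, ← intervalIntegral.integral_interval_sub_left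
        (hint b (ha.trans hab)) (hint a ha)]
      ring
    obtain ⟨hp_low, hp_high⟩ := (hx.mono fun s hs => ha.trans hs.1).mul_sub_le_sub_integral hab
    obtain ⟨hπ_low, hπ_high⟩ := hsand a b ha hab
    rw [abs_le]
    constructor <;> linarith
  exact mul_left_cancel₀ hρ0.ne' (eq_of_abs_sub_le_mul_sub_s6 (f := fun s => ρ * μ s) hr
    fun s t hs hst _ => hrevenue s t hs hst)

/-- Constancy of expected miner revenue in a single user's bid (the paper's
Lemma 'constantRevenue'): if the allocation x is nondecreasing with values in
[0,1], p is the Myerson payment rule, and π(r) = p(r) − ρ·μ(r) satisfies the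
payment sandwich, then μ(r) = μ(0) for all r ≥ 0. -/
theorem constant_revenue
    (x p μ : ℝ → ℝ) (ρ : ℝ) (hρ0 : 0 < ρ) (hρ1 : ρ ≤ 1)
    (hx0 : ∀ b : ℝ, 0 ≤ b → 0 ≤ x b)
    (hx1 : ∀ b : ℝ, 0 ≤ b → x b ≤ 1)
    (hmono : ∀ r r' : ℝ, 0 ≤ r → r ≤ r' → x r ≤ x r')
    (hp : ∀ b : ℝ, p b = b * x b - ∫ t in (0:ℝ)..b, x t)
    (hsand : ∀ r r' : ℝ, 0 ≤ r → r ≤ r' →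
      r * (x r' - x r) ≤ (p r' - ρ * μ r') - (p r - ρ * μ r) ∧
      (p r' - ρ * μ r') - (p r - ρ * μ r) ≤ r' * (x r' - x r)) :
    ∀ r : ℝ, 0 ≤ r → μ r = μ 0 :=
  constant_revenue_general x p μ ρ hρ0 hmono hp hsand
end

section
/- Let ψ : [0,∞) → [0,1] and φ : [0,∞) → ℝ, and suppose that for all a, b ≥ 0 one has φ(b) − φ(a) ≤ (b − a)·(ψ(b) − ψ(a)). Then φ is constant on [0,∞). -/
/-!
Swapping the roles of `a` and `b` in the hypothesis shows that the increment
`|φ b - φ a|` is bounded by `(b - a) * (ψ b - ψ a)`. Cutting `[a, b]` into `n`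
equal pieces and telescoping, the factor `b - a` becomes `(b - a) / n` while the
increments of `ψ` still sum to `ψ b - ψ a ≤ 1`; hence `|φ b - φ a| ≤ (b - a) / n`
for every `n`.
-/

open Filter

namespace SelfBoundingIncrement

variable {s : Set ℝ} {φ ψ : ℝ → ℝ}

theorem abs_sub_le_of_sub_le
    (h : ∀ x ∈ s, ∀ y ∈ s, φ y - φ x ≤ (y - x) * (ψ y - ψ x))
    {x y : ℝ} (hx : x ∈ s) (hy : y ∈ s) :
    |φ y - φ x| ≤ (y - x) * (ψ y - ψ x) := by
  refine abs_le.mpr ⟨?_, h x hx y hy⟩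
  linarith [h y hy x hx, show (x - y) * (ψ x - ψ y) = (y - x) * (ψ y - ψ x) by ring]

theorem abs_sub_add_nat_mul_le [s.OrdConnected]
    (h : ∀ x ∈ s, ∀ y ∈ s, |φ y - φ x| ≤ (y - x) * (ψ y - ψ x))
    {a d : ℝ} (ha : a ∈ s) (n : ℕ) (hn : a + n * d ∈ s) (hd : 0 ≤ d) :
    |φ (a + n * d) - φ a| ≤ d * (ψ (a + n * d) - ψ a) := by
  induction n with
  | zero => simp
  | succ n ih =>
    push_cast at hn ⊢
    have hmid : a + n * d ∈ s :=
      Set.OrdConnected.out ‹_› ha hn ⟨le_add_of_nonneg_right (by positivity), by linarith⟩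
    have hstep := h _ hmid _ hn
    rw [show a + (n + 1) * d - (a + n * d) = d by ring] at hstep
    calc |φ (a + (n + 1) * d) - φ a|
        ≤ |φ (a + (n + 1) * d) - φ (a + n * d)| + |φ (a + n * d) - φ a| :=
          abs_sub_le _ _ _
      _ ≤ d * (ψ (a + (n + 1) * d) - ψ (a + n * d)) + d * (ψ (a + n * d) - ψ a) :=
          add_le_add hstep (ih hmid)
      _ = d * (ψ (a + (n + 1) * d) - ψ a) := by ring

theorem abs_sub_le_div_mul [s.OrdConnected]
    (h : ∀ x ∈ s, ∀ y ∈ s, |φ y - φ x| ≤ (y - x) * (ψ y - ψ x))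
    {a b : ℝ} (ha : a ∈ s) (hb : b ∈ s) (hab : a ≤ b) {n : ℕ} (hn : n ≠ 0) :
    |φ b - φ a| ≤ (b - a) / n * (ψ b - ψ a) := by
  have hend : a + n * ((b - a) / n) = b := by field_simp; ring
  have := abs_sub_add_nat_mul_le h ha n (by rwa [hend])
    (div_nonneg (sub_nonneg.mpr hab) n.cast_nonneg)
  rwa [hend] at this

theorem eq_of_sub_le_mul_sub [s.OrdConnected] {C : ℝ}
    (hψ : ∀ x ∈ s, ∀ y ∈ s, ψ y - ψ x ≤ C)
    (h : ∀ x ∈ s, ∀ y ∈ s, φ y - φ x ≤ (y - x) * (ψ y - ψ x))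
    {a b : ℝ} (ha : a ∈ s) (hb : b ∈ s) (hab : a ≤ b) :
    φ a = φ b := by
  have habs : ∀ x ∈ s, ∀ y ∈ s, |φ y - φ x| ≤ (y - x) * (ψ y - ψ x) :=
    fun x hx y hy ↦ abs_sub_le_of_sub_le h hx hy
  have hbound : ∀ᶠ n : ℕ in atTop, |φ b - φ a| ≤ (b - a) * C / n := by
    filter_upwards [eventually_ne_atTop 0] with n hn
    calc |φ b - φ a| ≤ (b - a) / n * (ψ b - ψ a) := abs_sub_le_div_mul habs ha hb hab hn
      _ ≤ (b - a) / n * C :=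
          mul_le_mul_of_nonneg_left (hψ a ha b hb)
            (div_nonneg (sub_nonneg.mpr hab) n.cast_nonneg)
      _ = (b - a) * C / n := by ring
  have hzero := ge_of_tendsto (tendsto_const_div_atTop_nhds_zero_nat ((b - a) * C)) hbound
  exact (sub_eq_zero.mp (abs_nonpos_iff.mp hzero)).symm

end SelfBoundingIncrement

/-- Partition-and-limit argument at the heart of the paper's Lemma 'hartline'
(following Goldberg–Hartline): if φ(b) − φ(a) ≤ (b − a)·(ψ(b) − ψ(a)) for all
a, b ≥ 0, with ψ taking values in [0,1] on [0,∞), then φ is constant on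
[0,∞). -/
theorem hartline_constancy
    (ψ φ : ℝ → ℝ)
    (hψ0 : ∀ b : ℝ, 0 ≤ b → 0 ≤ ψ b)
    (hψ1 : ∀ b : ℝ, 0 ≤ b → ψ b ≤ 1)
    (h : ∀ a b : ℝ, 0 ≤ a → 0 ≤ b → φ b - φ a ≤ (b - a) * (ψ b - ψ a)) :
    ∀ a b : ℝ, 0 ≤ a → 0 ≤ b → φ a = φ b := by
  have hψ : ∀ x ∈ Set.Ici (0 : ℝ), ∀ y ∈ Set.Ici (0 : ℝ), ψ y - ψ x ≤ 1 :=
    fun x hx y hy ↦ by linarith [hψ0 x hx, hψ1 y hy]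
  have h' : ∀ x ∈ Set.Ici (0 : ℝ), ∀ y ∈ Set.Ici (0 : ℝ),
      φ y - φ x ≤ (y - x) * (ψ y - ψ x) :=
    fun x hx y hy ↦ h x y hx hy
  intro a b ha hb
  rcases le_total a b with hab | hba
  · exact SelfBoundingIncrement.eq_of_sub_le_mul_sub hψ h' ha hb hab
  · exact (SelfBoundingIncrement.eq_of_sub_le_mul_sub hψ h' hb ha hba).symm
end

section
/- Fix a reserve price r > 0 and define, for v, b ≥ 0, U(v, b) = (v − min(b, r)/2)·min(b/r, 1). Then for all v, b ≥ 0, U(v, b) ≤ U(v, v). Consequently, in the proportional auction truthful bidding maximizes every user's expected utility (strict UIC). -/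
/-!
Since `min (b / r) 1 = min b r / r`, the utility only depends on the effective bid
`c = min b r ≤ r`, and completing the square gives `U(v, b) = (v² - (v - c)²) / (2r)`.
So the utility is largest when `c` is as close to `v` as possible among `c ≤ r`,
i.e. at `c = min v r`, which is exactly the effective bid of the truthful bid `b = v`.
-/

section

variable {K : Type*} [Field K] [LinearOrder K] [IsStrictOrderedRing K]

def proportionalUtility (r v b : K) : K := (v - min b r / 2) * min (b / r) 1

theorem min_div_one_eq_min_div {r : K} (hr : 0 < r) (b : K) : min (b / r) 1 = min b r / r := by
  rw [← min_div_div_right hr.le, div_self hr.ne']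

theorem proportionalUtility_eq {r : K} (hr : 0 < r) (v b : K) :
    proportionalUtility r v b = (v ^ 2 - (v - min b r) ^ 2) / (2 * r) := by
  rw [proportionalUtility, min_div_one_eq_min_div hr]
  field_simp
  ring

theorem sq_sub_min_le_sq_sub {c r : K} (hc : c ≤ r) (v : K) : (v - min v r) ^ 2 ≤ (v - c) ^ 2 := by
  rcases le_total v r with hvr | hrv
  · rw [min_eq_left hvr, sub_self, sq, zero_mul]
    positivity
  · rw [min_eq_right hrv]
    exact pow_le_pow_left₀ (sub_nonneg.2 hrv) (by linarith) 2

theorem proportionalUtility_le_truthful {r : K} (hr : 0 < r) (v b : K) :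
    proportionalUtility r v b ≤ proportionalUtility r v v := by
  rw [proportionalUtility_eq hr, proportionalUtility_eq hr]
  gcongr (_ - ?_) / _
  exact sq_sub_min_le_sq_sub (min_le_right b r) v

end

/-- Strict UIC of the proportional auction: with reserve price r > 0, a user
with true value v bidding b obtains expected utility
U(v,b) = (v − min(b,r)/2)·min(b/r, 1), which is maximized by truthful
bidding. -/
theorem proportional_auction_UIC
    (r : ℝ) (hr : 0 < r) :
    ∀ v b : ℝ, 0 ≤ v → 0 ≤ b →
      (v - min b r / 2) * min (b / r) 1 ≤ (v - min v r / 2) * min (v / r) 1 :=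
  fun v b _ _ => proportionalUtility_le_truthful hr v b
end

section
/- Fix ε > 0 and a reserve price r ≥ 2ε. Define, for v, b ≥ 0, U(v, b) = (v − min(b, r)/2)·min(b/r, 1) and M(b) = (√(2rε)/2)·min(b/r, 1) if b ≥ √(2rε) and M(b) = 0 otherwise. Then for all v, b ≥ 0: U(v, b) + M(b) ≤ U(v, v) + M(v) + (5/4)·ε. Consequently, a coalition of the miner and c users can increase its joint expected utility by at most (5/4)·c·ε over honest behavior, i.e., the proportional auction is (5/4)cε-SCP against c-sized coalitions for every c ≥ 1. -/
/-!
Write `s = √(2rε)`, so that `s ≤ r` and `s² = 2rε`, and scale all utilities by `r`. Only the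
clipped bid `t = min b r` matters, and the user's scaled utility `(v - t/2)·t` falls short of
its value at the honest clipped bid `w = min v r` by at least `(t - w)²/2`. The miner's scaled
bonus can gain at most `s/2·(|t - w| + s)`, and `-d²/2 + s|d|/2 ≤ s²/8`, so the coalition gains
at most `5s²/8 = (5/4)·rε`.
-/

namespace ProportionalAuction

/-- `r · M(b)` for the clipped bid `t = min b r`, with `s = √(2rε)`. -/
noncomputable def bonus (s t : ℝ) : ℝ := if s ≤ t then s / 2 * t else 0

lemma utility_add_sq_le_utility_min {v r t : ℝ} (ht : t ≤ r) :
    (v - t / 2) * t + (t - min v r) ^ 2 / 2 ≤ (v - min v r / 2) * min v r := by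
  rcases le_total v r with hvr | hrv
  · rw [min_eq_left hvr]
    nlinarith
  · rw [min_eq_right hrv]
    nlinarith [mul_nonneg (sub_nonneg.2 hrv) (sub_nonneg.2 ht)]

lemma bonus_sub_bonus_le {s : ℝ} (hs : 0 ≤ s) (t w : ℝ) :
    bonus s t - bonus s w ≤ s / 2 * (|t - w| + s) := by
  have hd : t - w ≤ |t - w| := le_abs_self _
  unfold bonus
  split_ifs with hst hsw hsw <;> nlinarith [abs_nonneg (t - w)]

lemma clipped_joint_le {s v r t : ℝ} (hs : 0 ≤ s) (ht : t ≤ r) :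
    (v - t / 2) * t + bonus s t ≤
      (v - min v r / 2) * min v r + bonus s (min v r) + 5 / 8 * s ^ 2 := by
  have hutil := utility_add_sq_le_utility_min (v := v) ht
  have hbonus := bonus_sub_bonus_le hs t (min v r)
  nlinarith [sq_abs (t - min v r), sq_nonneg (|t - min v r| - s / 2)]

lemma joint_utility_eq {s r : ℝ} (hr : 0 < r) (hsr : s ≤ r) (v b : ℝ) :
    (v - min b r / 2) * min (b / r) 1 + (if s ≤ b then s / 2 * min (b / r) 1 else 0) =
      ((v - min b r / 2) * min b r + bonus s (min b r)) / r := by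
  have hprob : min (b / r) 1 = min b r / r := by
    rw [← min_div_div_right hr.le, div_self hr.ne']
  have hconf : s ≤ min b r ↔ s ≤ b := by simp [hsr]
  simp only [hprob, bonus, hconf]
  split_ifs <;> ring

end ProportionalAuction

open ProportionalAuction in
/-- (5/4)cε-SCP of the proportional auction: with reserve price r ≥ 2ε, for a
user with true value v bidding b, the joint expected utility of the miner and
that user, U(v,b) + M(b), exceeds the honest joint utility U(v,v) + M(v) by at
most (5/4)ε.  Summing over the at most c colluding users shows that the
proportional auction is (5/4)cε-SCP against c-sized coalitions for every
c ≥ 1. -/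
theorem proportional_auction_SCP
    (ε r : ℝ) (hε : 0 < ε) (hr : 2 * ε ≤ r)
    (U : ℝ → ℝ → ℝ) (M : ℝ → ℝ)
    (hU : ∀ v b : ℝ, U v b = (v - min b r / 2) * min (b / r) 1)
    (hM : ∀ b : ℝ, M b =
      if Real.sqrt (2 * r * ε) ≤ b then Real.sqrt (2 * r * ε) / 2 * min (b / r) 1
      else 0) :
    ∀ v b : ℝ, 0 ≤ v → 0 ≤ b →
      U v b + M b ≤ U v v + M v + 5 / 4 * ε := by
  intro v b _ _
  have hr0 : 0 < r := by linarith
  set s := Real.sqrt (2 * r * ε)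
  have hs2 : s ^ 2 = 2 * r * ε := Real.sq_sqrt (by positivity)
  have hsr : s ≤ r := Real.sqrt_le_iff.2 ⟨hr0.le, by nlinarith⟩
  have hgain : 5 / 4 * ε = 5 / 8 * s ^ 2 / r := by
    rw [hs2]; field_simp; ring
  rw [hU, hU, hM, hM, joint_utility_eq hr0 hsr, joint_utility_eq hr0 hsr, hgain, ← add_div]
  exact div_le_div_of_nonneg_right
    (clipped_joint_le (Real.sqrt_nonneg _) (min_le_right b r)) hr0.le
end

section
/- Fix a reserve price r ≥ 0 and an integer block size k ≥ 1. For all reals v ≥ 0 and b ≥ 0, and all integers ℓ ≥ 0 and m ≥ 0: 1[b ≥ r]·min(k/(ℓ + 1 + m), 1)·(v − r) ≤ 1[v ≥ r]·min(k/(ℓ + 1), 1)·(v − r). That is, in the MPC-assisted posted price auction with random selection, a user with true value v who misreports its bid as b and injects m additional fake candidate bids never obtains expected utility exceeding its truthful expected utility; together with the fact that all payments are burnt (the miner revenue is identically 0), this yields UIC, MIC, and (ρ,1)-SCP in the ex post setting for every ρ ∈ (0,1]. -/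
/-!
Injecting fake candidates only enlarges the candidate pool, so it can only lower the
probability `min (k / s) 1` that the user's own bid is confirmed. Misreporting the bid
merely switches that bid's candidacy on or off; since the user gains `v - r` when
confirmed, being a candidate pays exactly when `r ≤ v`, which is what truthful bidding does.
-/

theorem min_div_add_le_min_div {k s m : ℝ} (hk : 0 ≤ k) (hs : 0 < s) (hm : 0 ≤ m) :
    min (k / (s + m)) 1 ≤ min (k / s) 1 :=
  min_le_min_right 1 (div_le_div_of_nonneg_left hk hs (le_add_of_nonneg_right hm))

theorem ite_mul_mul_sub_le_ite_mul_mul_sub {r v b p q : ℝ} (hp : 0 ≤ p) (hpq : p ≤ q) :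
    (if r ≤ b then (1 : ℝ) else 0) * p * (v - r) ≤ (if r ≤ v then (1 : ℝ) else 0) * q * (v - r) := by
  have hq : 0 ≤ q := hp.trans hpq
  split_ifs with hb hv hv
  · exact mul_le_mul_of_nonneg_right (by linarith) (sub_nonneg.mpr hv)
  · nlinarith [not_le.mp hv]
  · simpa using mul_nonneg hq (sub_nonneg.mpr hv)
  · simp

theorem mpc_posted_price_random_selection_general
    (r : ℝ) (k : ℕ) :
    ∀ v b : ℝ, 0 ≤ v → 0 ≤ b → ∀ ℓ m : ℕ,
      (if r ≤ b then (1 : ℝ) else 0) * min ((k : ℝ) / ((ℓ : ℝ) + 1 + (m : ℝ))) 1 * (v - r)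
        ≤ (if r ≤ v then (1 : ℝ) else 0) * min ((k : ℝ) / ((ℓ : ℝ) + 1)) 1 * (v - r) := by
  intro v b _ _ ℓ m
  exact ite_mul_mul_sub_le_ite_mul_mul_sub (by positivity)
    (min_div_add_le_min_div k.cast_nonneg (by positivity) m.cast_nonneg)

/-- MPC-assisted posted price auction with random selection: a user with true
value v who misreports its bid as b and injects m additional fake candidate
bids (when ℓ other candidate bids are present) never obtains expected utility
exceeding its truthful expected utility.  Together with the zero miner revenue,
this yields UIC, MIC and (ρ,1)-SCP in the ex post setting. -/
theorem mpc_posted_price_random_selection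
    (r : ℝ) (hr : 0 ≤ r) (k : ℕ) (hk : 1 ≤ k) :
    ∀ v b : ℝ, 0 ≤ v → 0 ≤ b → ∀ ℓ m : ℕ,
      (if r ≤ b then (1 : ℝ) else 0) * min ((k : ℝ) / ((ℓ : ℝ) + 1 + (m : ℝ))) 1 * (v - r)
        ≤ (if r ≤ v then (1 : ℝ) else 0) * min ((k : ℝ) / ((ℓ : ℝ) + 1)) 1 * (v - r) :=
  mpc_posted_price_random_selection_general r k
end

section
/- Fix a reserve price r ≥ 0, an integer block size k ≥ 1, and a real T ≥ k. For all reals v ≥ 0 and b ≥ 0, and all integers ℓ ≥ 0 and m ≥ 0: 1[b ≥ r]·(v − r)·k/max(T, ℓ + 1 + m) ≤ 1[v ≥ r]·(v − r)·k/max(T, ℓ + 1). That is, in the MPC-assisted diluted posted price auction, misreporting one's bid and/or injecting fake candidate bids never increases a user's expected utility over truthful bidding (strict UIC). -/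
/-!
Conditioned on being confirmed, a user earns `v - r` whatever she bid, so changing the bid only
decides whether she enters the candidate pool, and entering is worthwhile exactly when `v ≥ r`.
Injecting `m` fake candidates can only enlarge the pool `max T (ℓ + 1 + m)` from which the `k`
winners are drawn, which lowers her confirmation probability.
-/

theorem ite_mul_sub_le_ite_mul_sub (r v b : ℝ) :
    (if r ≤ b then (1 : ℝ) else 0) * (v - r) ≤ (if r ≤ v then (1 : ℝ) else 0) * (v - r) := by
  split_ifs with hb hv <;> simp only [one_mul, zero_mul, le_refl] <;> linarith

theorem ite_mul_sub_nonneg (r v : ℝ) : 0 ≤ (if r ≤ v then (1 : ℝ) else 0) * (v - r) := by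
  split_ifs with hv
  · simpa using hv
  · simp

theorem div_max_le_div_max_of_le {a x y : ℝ} (T : ℝ) (ha : 0 ≤ a) (hx : 0 < x) (hxy : x ≤ y) :
    a / max T y ≤ a / max T x :=
  div_le_div_of_nonneg_left ha (lt_max_of_lt_right hx) (max_le_max_left T hxy)

theorem mpc_diluted_posted_price_UIC_general
    (r : ℝ) (k : ℕ) (T : ℝ) :
    ∀ v b : ℝ, 0 ≤ v → 0 ≤ b → ∀ ℓ m : ℕ,
      (if r ≤ b then (1 : ℝ) else 0) * (v - r) * (k : ℝ) / max T ((ℓ : ℝ) + 1 + (m : ℝ))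
        ≤ (if r ≤ v then (1 : ℝ) else 0) * (v - r) * (k : ℝ) / max T ((ℓ : ℝ) + 1) := by
  intro v b _ _ ℓ m
  have hpool : (0 : ℝ) < max T ((ℓ : ℝ) + 1 + (m : ℝ)) := lt_max_of_lt_right (by positivity)
  calc (if r ≤ b then (1 : ℝ) else 0) * (v - r) * (k : ℝ) / max T ((ℓ : ℝ) + 1 + (m : ℝ))
      ≤ (if r ≤ v then (1 : ℝ) else 0) * (v - r) * (k : ℝ) / max T ((ℓ : ℝ) + 1 + (m : ℝ)) :=
        div_le_div_of_nonneg_right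
          (mul_le_mul_of_nonneg_right (ite_mul_sub_le_ite_mul_sub r v b) k.cast_nonneg) hpool.le
    _ ≤ (if r ≤ v then (1 : ℝ) else 0) * (v - r) * (k : ℝ) / max T ((ℓ : ℝ) + 1) :=
        div_max_le_div_max_of_le T (mul_nonneg (ite_mul_sub_nonneg r v) k.cast_nonneg)
          (by positivity) (le_add_of_nonneg_right m.cast_nonneg)

/-- Strict UIC of the MPC-assisted diluted posted price auction: misreporting
one's bid as b and/or injecting m fake candidate bids (when ℓ other candidate
bids are present) never increases a user's expected utility over truthful
bidding. -/
theorem mpc_diluted_posted_price_UIC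
    (r : ℝ) (hr : 0 ≤ r) (k : ℕ) (hk : 1 ≤ k) (T : ℝ) (hT : (k : ℝ) ≤ T) :
    ∀ v b : ℝ, 0 ≤ v → 0 ≤ b → ∀ ℓ m : ℕ,
      (if r ≤ b then (1 : ℝ) else 0) * (v - r) * (k : ℝ) / max T ((ℓ : ℝ) + 1 + (m : ℝ))
        ≤ (if r ≤ v then (1 : ℝ) else 0) * (v - r) * (k : ℝ) / max T ((ℓ : ℝ) + 1) :=
  mpc_diluted_posted_price_UIC_general r k T
end

section
/- Let k ≥ 1 and c ≥ 1 be integers and let M > 0 and ε > 0 be reals with k·M ≥ ε, and set T = max(2c·√(kM/ε), k). Then for all reals r, v with 0 ≤ r ≤ v ≤ M and all integers ℓ, ℓ' with 0 ≤ ℓ' ≤ ℓ and ℓ' ≥ ℓ − c: (v − r)·( k/max(T, ℓ') − k/max(T, ℓ) ) ≤ ε/(2c). -/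
/-!
The map `x ↦ 1 / max T x` is `1 / T²`-Lipschitz, so a coalition shrinking the candidate count by
at most `c` raises a bidder's confirmation probability by at most `k c / T²`, hence its utility by
at most `M k c / T²`. The choice `T ≥ 2c √(kM/ε)` makes this at most `ε / (4c)`.
-/

section

variable {K : Type*} [Field K] [LinearOrder K] [IsStrictOrderedRing K]

theorem inv_max_sub_inv_max_le {T x y : K} (hT : 0 < T) (hxy : x ≤ y) :
    (max T x)⁻¹ - (max T y)⁻¹ ≤ (y - x) / T ^ 2 := by
  have hA : T ≤ max T x := le_max_left T x
  have hB : T ≤ max T y := le_max_left T y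
  have hgap : max T y - max T x ≤ y - x := by
    simpa [hxy] using max_sub_max_le_max T y T x
  calc (max T x)⁻¹ - (max T y)⁻¹ = (max T y - max T x) / (max T x * max T y) :=
        inv_sub_inv (by positivity) (by positivity)
    _ ≤ (y - x) / (T * T) := by gcongr
    _ = (y - x) / T ^ 2 := by rw [sq]

theorem inv_max_le_inv_max {T x y : K} (hT : 0 < T) (hxy : x ≤ y) :
    (max T y)⁻¹ ≤ (max T x)⁻¹ :=
  inv_anti₀ (lt_of_lt_of_le hT (le_max_left T x)) (max_le_max_left T hxy)

end

theorem sq_mul_le_of_mul_sqrt_le {a d ε T : ℝ} (ha : 0 ≤ a) (hd : 0 ≤ d) (hε : 0 < ε)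
    (h : d * √(a / ε) ≤ T) : d ^ 2 * a ≤ ε * T ^ 2 := by
  have hsq : d ^ 2 * (a / ε) ≤ T ^ 2 := by
    calc d ^ 2 * (a / ε) = (d * √(a / ε)) ^ 2 := by
          rw [mul_pow, Real.sq_sqrt (by positivity)]
      _ ≤ T ^ 2 := pow_le_pow_left₀ (by positivity) h 2
  calc d ^ 2 * a = ε * (d ^ 2 * (a / ε)) := by field_simp
    _ ≤ ε * T ^ 2 := by gcongr

theorem mpc_diluted_posted_price_SCP_key_general
    (k c : ℕ) (hk : 1 ≤ k) (hc : 1 ≤ c)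
    (M ε : ℝ) (hε : 0 < ε)
    (T : ℝ) (hT : T = max (2 * (c : ℝ) * Real.sqrt ((k : ℝ) * M / ε)) (k : ℝ))
    (r v : ℝ) (hr : 0 ≤ r) (hrv : r ≤ v) (hvM : v ≤ M)
    (ℓ ℓ' : ℕ) (hle : ℓ' ≤ ℓ) (hcap : ℓ ≤ ℓ' + c) :
    (v - r) * ((k : ℝ) / max T (ℓ' : ℝ) - (k : ℝ) / max T (ℓ : ℝ)) ≤ ε / (2 * (c : ℝ)) := by
  have hk1 : (1 : ℝ) ≤ k := by exact_mod_cast hk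
  have hc0 : (0 : ℝ) < c := by exact_mod_cast hc
  have hT0 : 0 < T := by rw [hT]; exact lt_of_lt_of_le one_pos (hk1.trans (le_max_right _ _))
  have hTs : 2 * (c : ℝ) * √(k * M / ε) ≤ T := hT ▸ le_max_left _ _
  have hM : 0 ≤ M := by linarith
  have hℓ : (ℓ' : ℝ) ≤ ℓ := by exact_mod_cast hle
  have hgap : (ℓ : ℝ) - ℓ' ≤ c := by
    have : (ℓ : ℝ) ≤ ℓ' + c := by exact_mod_cast hcap
    linarith
  have hdiff_nonneg : 0 ≤ (max T (ℓ' : ℝ))⁻¹ - (max T (ℓ : ℝ))⁻¹ :=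
    sub_nonneg.mpr (inv_max_le_inv_max hT0 hℓ)
  have hdiff : (max T (ℓ' : ℝ))⁻¹ - (max T (ℓ : ℝ))⁻¹ ≤ c / T ^ 2 :=
    (inv_max_sub_inv_max_le hT0 hℓ).trans (by gcongr)
  have hdilution : (2 * c) ^ 2 * (k * M) ≤ ε * T ^ 2 :=
    sq_mul_le_of_mul_sqrt_le (by positivity) (by positivity) hε hTs
  calc (v - r) * ((k : ℝ) / max T (ℓ' : ℝ) - (k : ℝ) / max T (ℓ : ℝ))
      = (v - r) * k * ((max T (ℓ' : ℝ))⁻¹ - (max T (ℓ : ℝ))⁻¹) := by ring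
    _ ≤ M * k * (c / T ^ 2) := by gcongr; linarith
    _ ≤ ε / (2 * c) := by
        rw [mul_div_assoc', div_le_div_iff₀ (by positivity) (by positivity)]
        nlinarith [mul_pos hc0 hc0, mul_nonneg (by positivity : (0 : ℝ) ≤ k * M) hc0.le]

/-- Key inequality in the ε-SCP proof of the MPC-assisted diluted posted price
auction: with dilution parameter T = max(2c·√(kM/ε), k), if a coalition of at
most c users reduces the number of candidates from ℓ to ℓ' ≥ ℓ − c, then the
expected utility of any one colluding user with true value v ∈ [r, M]
increases by at most ε/(2c). -/
theorem mpc_diluted_posted_price_SCP_key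
    (k c : ℕ) (hk : 1 ≤ k) (hc : 1 ≤ c)
    (M ε : ℝ) (hM : 0 < M) (hε : 0 < ε) (hkM : ε ≤ (k : ℝ) * M)
    (T : ℝ) (hT : T = max (2 * (c : ℝ) * Real.sqrt ((k : ℝ) * M / ε)) (k : ℝ))
    (r v : ℝ) (hr : 0 ≤ r) (hrv : r ≤ v) (hvM : v ≤ M)
    (ℓ ℓ' : ℕ) (hle : ℓ' ≤ ℓ) (hcap : ℓ ≤ ℓ' + c) :
    (v - r) * ((k : ℝ) / max T (ℓ' : ℝ) - (k : ℝ) / max T (ℓ : ℝ)) ≤ ε / (2 * (c : ℝ)) :=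
  mpc_diluted_posted_price_SCP_key_general k c hk hc M ε hε T hT r v hr hrv hvM ℓ ℓ' hle hcap
end

section
/- (ε-UIC of the staircase mechanism.) Fix the staircase mechanism with parameters k, M, ε, and any fixed tie-breaking rule. For every finite multiset b₋ᵢ of other users' bids, every true value v ∈ [0, M] of user i, and every strategy of user i consisting of submitting at most one own bid b' ≥ 0 (possibly abstaining) together with an arbitrary finite multiset of fake bids: let the honest miner include the top min(k, ·) bids of the resulting pool, let t' be the threshold index of that block, and let user i's strategic utility be (v − F_{t'})·1[b' is confirmed] minus F_{t'} for each of user i's confirmed fake bids. Then this strategic utility is at most user i's truthful utility plus ε, where the truthful utility equals (v − F_t)·1[v is confirmed] for the block formed from the top min(k, ·) bids of b₋ᵢ together with the single bid v, with threshold index t. -/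
/-!
Fake bids can only hurt the deviating user: each confirmed one pays a nonnegative price.
The bids of others confirmed in the honest block stay in the strategic pool, so the strategic
threshold t' is at least t minus the number of honest confirmations of v (one or none). If v
is confirmed honestly, its price F_{t'} ≥ F_{t-1} = F_t - ε rises by at most ε. If it is not,
then v ≤ F_{t+1}, since an unconfirmed bid above F_{t+1} would lift the honest threshold; as
t ≤ t', a win at price F_{t'} gains at most F_{t+1} - F_{t'} ≤ ε.
-/

/-- Payment levels of the staircase mechanism: F_i = F_0 + i·ε with
F_0 = M − min(⌊M/ε⌋, k)·ε. -/
noncomputable def staircaseF (k : ℕ) (M ε : ℝ) (i : ℕ) : ℝ :=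
  (M - (min (Nat.floor (M / ε)) k : ℕ) * ε) + (i : ℝ) * ε

/-- Threshold index t(B) of a block B: the largest i such that the i-th
largest bid of B is at least F_i, equivalently such that B contains at least
i bids that are ≥ F_i (and 0 if there is no such i ≥ 1). -/
noncomputable def staircaseThresh (k : ℕ) (M ε : ℝ) (B : Multiset ℝ) : ℕ :=
  (Finset.range (Multiset.card B + 1)).sup
    (fun i => if i ≤ Multiset.card (B.filter (fun x => staircaseF k M ε i ≤ x)) then i else 0)


namespace Multiset

variable {α : Type*} [Preorder α] [DecidableEq α]

def IsTopPart (D P : Multiset α) : Prop :=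
  D ≤ P ∧ ∀ x ∈ D, ∀ y ∈ P - D, y ≤ x

variable {C D P : Multiset α}

theorem IsTopPart.trans (hCD : IsTopPart C D) (hDP : IsTopPart D P) : IsTopPart C P := by
  refine ⟨hCD.1.trans hDP.1, fun x hx y hy => ?_⟩
  rw [← count_pos, count_sub] at hy
  by_cases hyD : 0 < count y (D - C)
  · exact hCD.2 x hx y (count_pos.1 hyD)
  · have hy' : y ∈ P - D := by
      rw [← count_pos, count_sub]
      rw [count_sub] at hyD
      omega
    exact hDP.2 x (mem_of_le hCD.1 hx) y hy'

variable [DecidableLE α]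

theorem IsTopPart.min_card_filter_le (h : IsTopPart D P) (c : α) :
    min (card (P.filter (c ≤ ·))) (card D) ≤ card (D.filter (c ≤ ·)) := by
  by_cases hout : (P - D).filter (c ≤ ·) = 0
  · have hsplit : card (P.filter (c ≤ ·))
        = card ((P - D).filter (c ≤ ·)) + card (D.filter (c ≤ ·)) := by
      rw [← card_add, ← filter_add, tsub_add_cancel_of_le h.1]
    rw [hsplit, hout, card_zero, zero_add]
    exact min_le_left _ _
  · obtain ⟨y, hy⟩ := exists_mem_of_ne_zero hout
    have hall : D.filter (c ≤ ·) = D := filter_eq_self.2 fun x hx =>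
      (of_mem_filter hy).trans (h.2 x hx y (mem_of_mem_filter hy))
    rw [hall]
    exact min_le_right _ _

theorem IsTopPart.le_of_card_le_card_filter (h : IsTopPart D P) {c : α}
    (hc : card D ≤ card (P.filter (c ≤ ·))) : ∀ x ∈ D, c ≤ x := by
  have hD : card D ≤ card (D.filter (c ≤ ·)) := by
    simpa [hc] using h.min_card_filter_le c
  exact filter_eq_self.1 (eq_of_le_of_card_le (filter_le _ _) hD)

end Multiset

open Multiset

section Staircase

variable {k : ℕ} {M ε : ℝ}

theorem staircaseF_succ (i : ℕ) : staircaseF k M ε (i + 1) = staircaseF k M ε i + ε := by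
  unfold staircaseF; push_cast; ring

theorem staircaseF_monotone (hε : 0 ≤ ε) : Monotone (staircaseF k M ε) := fun i j hij => by
  unfold staircaseF
  gcongr

theorem staircaseF_nonneg (hM : 0 ≤ M) (hε : 0 < ε) (i : ℕ) : 0 ≤ staircaseF k M ε i := by
  have hfloor : (Nat.floor (M / ε) : ℝ) * ε ≤ M :=
    (le_div_iff₀ hε).1 (Nat.floor_le (div_nonneg hM hε.le))
  have hmin : ((min (Nat.floor (M / ε)) k : ℕ) : ℝ) ≤ Nat.floor (M / ε) := by
    exact_mod_cast min_le_left _ _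
  unfold staircaseF
  nlinarith [(Nat.cast_nonneg i : (0:ℝ) ≤ i)]

theorem le_staircaseF_self (hε : 0 ≤ ε) : M ≤ staircaseF k M ε k := by
  have hmin : ((min (Nat.floor (M / ε)) k : ℕ) : ℝ) ≤ k := by exact_mod_cast min_le_right _ _
  unfold staircaseF
  nlinarith

variable (k M ε) in
theorem staircaseThresh_le_card_filter (B : Multiset ℝ) :
    staircaseThresh k M ε B
      ≤ card (B.filter (staircaseF k M ε (staircaseThresh k M ε B) ≤ ·)) := by
  obtain ⟨i, -, hi⟩ := Finset.exists_mem_eq_sup (Finset.range (card B + 1))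
    ⟨0, Finset.mem_range.2 (Nat.succ_pos _)⟩
    (fun i => if i ≤ card (B.filter (staircaseF k M ε i ≤ ·)) then i else 0)
  unfold staircaseThresh
  rw [hi]
  split_ifs with h
  · exact h
  · exact Nat.zero_le _

theorem le_staircaseThresh {B : Multiset ℝ} {j : ℕ}
    (hj : j ≤ card (B.filter (staircaseF k M ε j ≤ ·))) : j ≤ staircaseThresh k M ε B := by
  have hmem : j ∈ Finset.range (card B + 1) :=
    Finset.mem_range.2 (Nat.lt_succ_of_le (hj.trans (card_le_card (filter_le _ _))))
  unfold staircaseThresh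
  exact le_of_eq_of_le (if_pos hj).symm (Finset.le_sup (f := fun i =>
    if i ≤ card (B.filter (staircaseF k M ε i ≤ ·)) then i else 0) hmem)

theorem staircaseThresh_le_card (B : Multiset ℝ) : staircaseThresh k M ε B ≤ card B :=
  (staircaseThresh_le_card_filter k M ε B).trans (card_le_card (filter_le _ _))

theorem staircaseF_staircaseThresh_le_of_mem {B C : Multiset ℝ} (hC : IsTopPart C B)
    (hcard : card C = staircaseThresh k M ε B) :
    ∀ x ∈ C, staircaseF k M ε (staircaseThresh k M ε B) ≤ x :=
  hC.le_of_card_le_card_filter (hcard ▸ staircaseThresh_le_card_filter k M ε B)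

theorem card_le_staircaseThresh {D P E : Multiset ℝ} (hD : IsTopPart D P)
    (hDcard : card D = min k (card P)) (hEP : E ≤ P) (hEk : card E ≤ k)
    (hE : ∀ x ∈ E, staircaseF k M ε (card E) ≤ x) : card E ≤ staircaseThresh k M ε D := by
  have hEP' : card E ≤ card (P.filter (staircaseF k M ε (card E) ≤ ·)) :=
    card_le_card (le_filter.2 ⟨hEP, hE⟩)
  have hED : card E ≤ card D := hDcard ▸ le_min hEk (card_le_card hEP)
  exact le_staircaseThresh ((le_min hEP' hED).trans (hD.min_card_filter_le _))

theorem le_staircaseF_succ_staircaseThresh {D P C : Multiset ℝ} (hε : 0 ≤ ε)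
    (hD : IsTopPart D P)
    (hDcard : card D = min k (card P)) (hC : IsTopPart C D)
    (hCcard : card C = staircaseThresh k M ε D) {y : ℝ} (hyM : y ≤ M) (hy : y ∈ P - C) :
    y ≤ staircaseF k M ε (staircaseThresh k M ε D + 1) := by
  set t := staircaseThresh k M ε D
  -- otherwise `y` and the `t` confirmed bids would be `t + 1` bids above `F (t + 1)`
  by_contra! hlt
  have htk : t + 1 ≤ k := by
    by_contra! hkt
    have := staircaseF_monotone (k := k) (M := M) hε hkt.le
    linarith [le_staircaseF_self (k := k) (M := M) hε]
  have hCP := hC.trans hD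
  have hyC : y ::ₘ C ≤ P := by
    rw [← singleton_add, add_comm]
    exact (le_tsub_iff_left hCP.1).1 (singleton_le.2 hy)
  have hcard : card (y ::ₘ C) = t + 1 := by rw [card_cons, hCcard]
  have hbig : ∀ x ∈ y ::ₘ C, staircaseF k M ε (card (y ::ₘ C)) ≤ x := by
    intro x hx
    rw [hcard]
    rcases mem_cons.1 hx with rfl | hxC
    · exact hlt.le
    · exact hlt.le.trans (hCP.2 x hxC y hy)
  have := card_le_staircaseThresh hD hDcard hyC (hcard ▸ htk) hbig
  omega

theorem card_le_staircaseThresh_of_le_confirmed {B K E D P : Multiset ℝ} (hε : 0 ≤ ε)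
    (hK : IsTopPart K B) (hKcard : card K = staircaseThresh k M ε B) (hBk : card B ≤ k)
    (hEK : E ≤ K) (hD : IsTopPart D P) (hDcard : card D = min k (card P)) (hEP : E ≤ P) :
    card E ≤ staircaseThresh k M ε D := by
  have hEt : card E ≤ staircaseThresh k M ε B := hKcard ▸ card_le_card hEK
  refine card_le_staircaseThresh hD hDcard hEP (hEt.trans ((staircaseThresh_le_card B).trans hBk))
    fun x hx => (staircaseF_monotone hε hEt).trans ?_
  exact staircaseF_staircaseThresh_le_of_mem hK hKcard x (mem_of_le hEK hx)

theorem truthful_utility_nonneg {H K Kv : Multiset ℝ} {v : ℝ} (hK : IsTopPart (K + Kv) H)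
    (hKcard : card (K + Kv) = staircaseThresh k M ε H) (hKv : Kv ≤ {v}) :
    0 ≤ (v - staircaseF k M ε (staircaseThresh k M ε H)) * card Kv := by
  rcases le_singleton.1 hKv with rfl | rfl
  · simp
  · have hv := staircaseF_staircaseThresh_le_of_mem hK hKcard v (by simp)
    simpa using hv

theorem sub_staircaseF_le_truthful_utility_add {O H K Kv : Multiset ℝ} {v : ℝ} {t' : ℕ}
    (hε : 0 ≤ ε) (hvM : v ≤ M) (hH : IsTopPart H (v ::ₘ O))
    (hHcard : card H = min k (card (v ::ₘ O))) (hK : IsTopPart (K + Kv) H)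
    (hKcard : card (K + Kv) = staircaseThresh k M ε H) (hKO : K ≤ O) (hKv : Kv ≤ {v})
    (ht' : card K ≤ t') :
    v - staircaseF k M ε t'
      ≤ (v - staircaseF k M ε (staircaseThresh k M ε H)) * card Kv + ε := by
  set t := staircaseThresh k M ε H
  have hF := staircaseF_monotone (k := k) (M := M) hε
  have hsucc := staircaseF_succ (k := k) (M := M) (ε := ε) t'
  rcases le_singleton.1 hKv with rfl | rfl
  · have hvP : v ∈ (v ::ₘ O) - (K + 0) := by
      rw [add_zero, cons_sub_of_le _ hKO]
      exact mem_cons_self _ _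
    have hv := le_staircaseF_succ_staircaseThresh hε hH hHcard hK hKcard hvM hvP
    have htt' : t + 1 ≤ t' + 1 := by rw [add_zero] at hKcard; omega
    have := hF htt'
    simp only [card_zero, Nat.cast_zero, mul_zero, zero_add]
    linarith
  · have hv := staircaseF_staircaseThresh_le_of_mem hK hKcard v (by simp)
    have htt' : t ≤ t' + 1 := by rw [card_add, card_singleton] at hKcard; omega
    have := hF htt'
    simp only [card_singleton, Nat.cast_one, mul_one]
    linarith

end Staircase

theorem staircase_eps_UIC_general
    (k : ℕ) (M ε : ℝ) (hM : 0 < M) (hε : 0 < ε)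
    (bOthers : Multiset ℝ)
    (v : ℝ) (hvM : v ≤ M)
    (own fakes : Multiset ℝ)
    (hownCard : Multiset.card own ≤ 1)
    -- the strategic block: top min(k, ·) bids of the strategic pool,
    -- decomposed according to the origin of each included bid
    (Both Bfake Bown : Multiset ℝ)
    (hBoth : Both ≤ bOthers) (hBfake : Bfake ≤ fakes) (hBown : Bown ≤ own)
    (hBcard : Multiset.card (Both + Bfake + Bown)
      = min k (Multiset.card (bOthers + fakes + own)))
    (hBtop : ∀ x ∈ Both + Bfake + Bown,
      ∀ y ∈ (bOthers + fakes + own) - (Both + Bfake + Bown), y ≤ x)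
    -- the confirmed bids of the strategic block: its t' largest bids
    (Cfake Cown : Multiset ℝ)
    (hCown : Cown ≤ Bown)
    -- the honest block: top min(k, ·) bids of bOthers together with the bid v
    (Hoth Hv : Multiset ℝ)
    (hHoth : Hoth ≤ bOthers) (hHv : Hv ≤ {v})
    (hHcard : Multiset.card (Hoth + Hv) = min k (Multiset.card (v ::ₘ bOthers)))
    (hHtop : ∀ x ∈ Hoth + Hv, ∀ y ∈ (v ::ₘ bOthers) - (Hoth + Hv), y ≤ x)
    -- the confirmed bids of the honest block: its t largest bids
    (Koth Kv : Multiset ℝ)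
    (hKoth : Koth ≤ Hoth) (hKv : Kv ≤ Hv)
    (hKcard : Multiset.card (Koth + Kv) = staircaseThresh k M ε (Hoth + Hv))
    (hKtop : ∀ x ∈ Koth + Kv, ∀ y ∈ (Hoth + Hv) - (Koth + Kv), y ≤ x) :
    (v - staircaseF k M ε (staircaseThresh k M ε (Both + Bfake + Bown)))
        * (Multiset.card Cown : ℝ)
      - (Multiset.card Cfake : ℝ)
        * staircaseF k M ε (staircaseThresh k M ε (Both + Bfake + Bown))
    ≤ (v - staircaseF k M ε (staircaseThresh k M ε (Hoth + Hv)))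
        * (Multiset.card Kv : ℝ) + ε := by
  have hH : IsTopPart (Hoth + Hv) (v ::ₘ bOthers) :=
    ⟨(add_le_add hHoth hHv).trans (by rw [add_comm, singleton_add]), hHtop⟩
  have hK : IsTopPart (Koth + Kv) (Hoth + Hv) := ⟨add_le_add hKoth hKv, hKtop⟩
  have hKoth_le : card Koth ≤ staircaseThresh k M ε (Both + Bfake + Bown) :=
    card_le_staircaseThresh_of_le_confirmed hε.le hK hKcard (hHcard ▸ min_le_left _ _)
      (le_add_right _ _) ⟨add_le_add (add_le_add hBoth hBfake) hBown, hBtop⟩ hBcard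
      ((hKoth.trans hHoth).trans ((le_add_right _ _).trans (le_add_right _ _)))
  have hwin := sub_staircaseF_le_truthful_utility_add hε.le hvM hH hHcard hK hKcard
    (hKoth.trans hHoth) (hKv.trans hHv) hKoth_le
  have hlose := truthful_utility_nonneg hK hKcard (hKv.trans hHv)
  have hfake := mul_nonneg (Nat.cast_nonneg (card Cfake))
    (staircaseF_nonneg (k := k) hM.le hε (staircaseThresh k M ε (Both + Bfake + Bown)))
  have hown : card Cown ≤ 1 := (card_le_card (hCown.trans hBown)).trans hownCard
  interval_cases card Cown <;> push_cast <;> linarith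

/-- ε-UIC of the staircase mechanism (for an arbitrary tie-breaking rule,
modelled by quantifying over every admissible choice of included block and
confirmed sub-multiset).  User i has true value v ∈ [0, M]; it may submit at
most one own bid (the multiset `own`, of size ≤ 1) together with a finite
multiset `fakes` of fake bids.  The honest miner includes the top
min(k, ·) bids of the pool; the t largest bids of the block are confirmed and
each pays F_t.  The strategic utility is (v − F_{t'})·1[own bid confirmed]
minus F_{t'} for each confirmed fake bid, and it exceeds the truthful utility
(v − F_t)·1[v confirmed] by at most ε. -/
theorem staircase_eps_UIC
    (k : ℕ) (hk : 1 ≤ k) (M ε : ℝ) (hM : 0 < M) (hε : 0 < ε)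
    (bOthers : Multiset ℝ) (hbO : ∀ x ∈ bOthers, (0:ℝ) ≤ x)
    (v : ℝ) (hv0 : 0 ≤ v) (hvM : v ≤ M)
    (own fakes : Multiset ℝ)
    (hownCard : Multiset.card own ≤ 1)
    (hown0 : ∀ x ∈ own, (0:ℝ) ≤ x) (hfk0 : ∀ x ∈ fakes, (0:ℝ) ≤ x)
    -- the strategic block: top min(k, ·) bids of the strategic pool,
    -- decomposed according to the origin of each included bid
    (Both Bfake Bown : Multiset ℝ)
    (hBoth : Both ≤ bOthers) (hBfake : Bfake ≤ fakes) (hBown : Bown ≤ own)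
    (hBcard : Multiset.card (Both + Bfake + Bown)
      = min k (Multiset.card (bOthers + fakes + own)))
    (hBtop : ∀ x ∈ Both + Bfake + Bown,
      ∀ y ∈ (bOthers + fakes + own) - (Both + Bfake + Bown), y ≤ x)
    -- the confirmed bids of the strategic block: its t' largest bids
    (Coth Cfake Cown : Multiset ℝ)
    (hCoth : Coth ≤ Both) (hCfake : Cfake ≤ Bfake) (hCown : Cown ≤ Bown)
    (hCcard : Multiset.card (Coth + Cfake + Cown)
      = staircaseThresh k M ε (Both + Bfake + Bown))
    (hCtop : ∀ x ∈ Coth + Cfake + Cown,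
      ∀ y ∈ (Both + Bfake + Bown) - (Coth + Cfake + Cown), y ≤ x)
    -- the honest block: top min(k, ·) bids of bOthers together with the bid v
    (Hoth Hv : Multiset ℝ)
    (hHoth : Hoth ≤ bOthers) (hHv : Hv ≤ {v})
    (hHcard : Multiset.card (Hoth + Hv) = min k (Multiset.card (v ::ₘ bOthers)))
    (hHtop : ∀ x ∈ Hoth + Hv, ∀ y ∈ (v ::ₘ bOthers) - (Hoth + Hv), y ≤ x)
    -- the confirmed bids of the honest block: its t largest bids
    (Koth Kv : Multiset ℝ)
    (hKoth : Koth ≤ Hoth) (hKv : Kv ≤ Hv)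
    (hKcard : Multiset.card (Koth + Kv) = staircaseThresh k M ε (Hoth + Hv))
    (hKtop : ∀ x ∈ Koth + Kv, ∀ y ∈ (Hoth + Hv) - (Koth + Kv), y ≤ x) :
    (v - staircaseF k M ε (staircaseThresh k M ε (Both + Bfake + Bown)))
        * (Multiset.card Cown : ℝ)
      - (Multiset.card Cfake : ℝ)
        * staircaseF k M ε (staircaseThresh k M ε (Both + Bfake + Bown))
    ≤ (v - staircaseF k M ε (staircaseThresh k M ε (Hoth + Hv)))
        * (Multiset.card Kv : ℝ) + ε :=
  staircase_eps_UIC_general k M ε hM hε bOthers v hvM own fakes hownCard Both Bfake Bown hBoth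
    hBfake hBown hBcard hBtop Cfake Cown hCown Hoth Hv hHoth hHv hHcard hHtop Koth Kv hKoth hKv
    hKcard hKtop
end

section
/- Fix ε > 0 and a reserve price r ≥ 2ε, and let M(b) = (√(2rε)/2)·min(b/r, 1) if b ≥ √(2rε) and M(b) = 0 otherwise (the expected miner revenue generated by a single bid b in the proportional auction). Then M(b) = √(2rε)/2 whenever b ≥ r, and consequently, if n bids are drawn independently from a Borel probability distribution D on [0,∞) with Pr_{X∼D}[X ≥ r] ≥ 1/2 and all users bid truthfully, the expected total miner revenue ∑ over the n bids of E[M(X)] is at least (n/4)·√(2rε). -/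
/-!
Every bid of at least `r` is confirmed with certainty and pays the miner `√(2rε)/2`, since
`√(2rε) ≤ r` when `2ε ≤ r`. The revenue is nonnegative, so by Markov's inequality its expectation
is at least `√(2rε)/2` times the probability of a bid `≥ r`, which is at least `1/2`.
-/

open MeasureTheory

/-- The miner is paid `t / 2` per confirmed bid of at least `t`; the paper takes `t = √(2rε)`. -/
noncomputable def proportionalRevenue (r t b : ℝ) : ℝ :=
  if t ≤ b then t / 2 * min (b / r) 1 else 0

namespace proportionalRevenue

variable {r t : ℝ}

theorem nonneg (hr : 0 ≤ r) (ht : 0 ≤ t) (b : ℝ) : 0 ≤ proportionalRevenue r t b := by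
  unfold proportionalRevenue
  split_ifs with hb
  · have : 0 ≤ min (b / r) 1 := le_min (div_nonneg (ht.trans hb) hr) zero_le_one
    positivity
  · rfl

theorem le_half (ht : 0 ≤ t) (b : ℝ) : proportionalRevenue r t b ≤ t / 2 := by
  unfold proportionalRevenue
  split_ifs
  · exact mul_le_of_le_one_right (by positivity) (min_le_right _ _)
  · positivity

theorem eq_half_of_le (hr : 0 < r) (htr : t ≤ r) {b : ℝ} (hb : r ≤ b) :
    proportionalRevenue r t b = t / 2 := by
  rw [proportionalRevenue, if_pos (htr.trans hb), min_eq_right ((one_le_div hr).mpr hb), mul_one]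

theorem measurable (r t : ℝ) : Measurable (proportionalRevenue r t) :=
  Measurable.ite measurableSet_Ici (by fun_prop) measurable_const

theorem integrable (hr : 0 ≤ r) (ht : 0 ≤ t) (μ : Measure ℝ) [IsFiniteMeasure μ] :
    Integrable (proportionalRevenue r t) μ :=
  (integrable_const (t / 2)).mono' (measurable r t).aestronglyMeasurable
    (.of_forall fun b => by
      rw [Real.norm_of_nonneg (nonneg hr ht b)]
      exact le_half ht b)

theorem half_mul_measureReal_Ici_le_integral (hr : 0 < r) (ht : 0 ≤ t) (htr : t ≤ r)
    (μ : Measure ℝ) [IsFiniteMeasure μ] :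
    t / 2 * μ.real (Set.Ici r) ≤ ∫ b, proportionalRevenue r t b ∂μ :=
  calc t / 2 * μ.real (Set.Ici r)
      ≤ t / 2 * μ.real {b | t / 2 ≤ proportionalRevenue r t b} := by
        gcongr
        · exact measure_ne_top _ _
        · intro b hb
          exact (eq_half_of_le hr htr hb).ge
    _ ≤ ∫ b, proportionalRevenue r t b ∂μ :=
        mul_meas_ge_le_integral_of_nonneg (.of_forall (nonneg hr.le ht)) (integrable hr.le ht μ) _

end proportionalRevenue

theorem Real.sqrt_two_mul_mul_le {ε r : ℝ} (hr0 : 0 ≤ r) (hr : 2 * ε ≤ r) :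
    √(2 * r * ε) ≤ r :=
  (Real.sqrt_le_left hr0).mpr (by nlinarith)

theorem proportional_auction_revenue_general
    (ε r : ℝ) (hε : 0 < ε) (hr : 2 * ε ≤ r)
    (M : ℝ → ℝ)
    (hM : ∀ b : ℝ, M b =
      if Real.sqrt (2 * r * ε) ≤ b then Real.sqrt (2 * r * ε) / 2 * min (b / r) 1
      else 0)
    (D : Measure ℝ) [IsProbabilityMeasure D]
    (hmed : (1 : ENNReal) / 2 ≤ D (Set.Ici r))
    (n : ℕ) :
    (∀ b : ℝ, r ≤ b → M b = Real.sqrt (2 * r * ε) / 2) ∧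
    ((n : ℝ) / 4) * Real.sqrt (2 * r * ε) ≤ (n : ℝ) * ∫ x, M x ∂D := by
  have hr0 : 0 < r := by linarith
  have hsr := Real.sqrt_two_mul_mul_le hr0.le hr
  obtain rfl : M = proportionalRevenue r √(2 * r * ε) := funext hM
  refine ⟨fun b => proportionalRevenue.eq_half_of_le hr0 hsr, ?_⟩
  have hmed' : 1 / 2 ≤ D.real (Set.Ici r) := by
    simpa [measureReal_def] using ENNReal.toReal_mono (measure_ne_top D _) hmed
  calc (n : ℝ) / 4 * √(2 * r * ε) = n * (√(2 * r * ε) / 2 * (1 / 2)) := by ring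
    _ ≤ n * (√(2 * r * ε) / 2 * D.real (Set.Ici r)) := by gcongr
    _ ≤ n * ∫ b, proportionalRevenue r √(2 * r * ε) b ∂D := by
      gcongr
      exact proportionalRevenue.half_mul_measureReal_Ici_le_integral hr0 (Real.sqrt_nonneg _) hsr D

/-- Miner revenue of the proportional auction: with reserve price r ≥ 2ε, the
expected miner revenue M(b) generated by a single bid b equals √(2rε)/2
whenever b ≥ r; consequently, if n bids are drawn i.i.d. from a distribution D
on [0,∞) with Pr[X ≥ r] ≥ 1/2 and all users bid truthfully, the expected total
miner revenue n·E[M(X)] is at least (n/4)·√(2rε). -/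
theorem proportional_auction_revenue
    (ε r : ℝ) (hε : 0 < ε) (hr : 2 * ε ≤ r)
    (M : ℝ → ℝ)
    (hM : ∀ b : ℝ, M b =
      if Real.sqrt (2 * r * ε) ≤ b then Real.sqrt (2 * r * ε) / 2 * min (b / r) 1
      else 0)
    (D : Measure ℝ) [IsProbabilityMeasure D] (hD : D (Set.Iio 0) = 0)
    (hmed : (1 : ENNReal) / 2 ≤ D (Set.Ici r))
    (n : ℕ) :
    (∀ b : ℝ, r ≤ b → M b = Real.sqrt (2 * r * ε) / 2) ∧
    ((n : ℝ) / 4) * Real.sqrt (2 * r * ε) ≤ (n : ℝ) * ∫ x, M x ∂D :=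
  proportional_auction_revenue_general ε r hε hr M hM D hmed n
end
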